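/- One has the identity I_q = D D* + R Σ R*; consequently (combining with the bound on the largest eigenvalue of R Σ R* and Weyl's inequality) the smallest eigenvalue Δ_q of the Hermitian positive semidefinite matrix D D* satisfies 1 ≥ Δ_q ≥ 1 − λ_{q+1}(Σ)/μ_q. -/

import Mathlib

open Matrix ComplexOrder

/-- The `j`-th largest eigenvalue (1-indexed) of a Hermitian complex matrix
(junk value otherwise). -/
noncomputable def eigJ {n : ℕ} (A : Matrix (Fin n) (Fin n) ℂ) (j : ℕ) : ℝ :=
  if hA : A.IsHermitian then
    ((Finset.univ.val.map hA.eigenvalues).sort (· ≤ ·)).getD (n - j) 0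
  else 0

/-!
Put `M = C Λ^{-1/2} P̃`. Since `P̃` only sees the top-left block, `P̃ Σ P̃* = P Σ_m P* = Λ` and
`P̃ P̃* = I`, so `M Σ M* = C C* = I`: `M` whitens `Σ`. Splitting `Σ = P_n* Λ_n P_n + Q* Λ_Q Q` along
its eigenbasis splits `M Σ M*` into `D D* + R Σ R*`. In the Loewner order
`R Σ R* = (M Q*) Λ_Q (M Q*)* ≤ λ_{q+1} M M* = λ_{q+1} C Λ⁻¹ C* ≤ (λ_{q+1} / μ_q) I`,
so `D D* = I - R Σ R*` lies between `(1 - λ_{q+1} / μ_q) I` and `I`, and so do its eigenvalues.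
-/

open scoped MatrixOrder

namespace Matrix

section Loewner

variable {𝕜 : Type*} [RCLike 𝕜] {m n : Type*}

theorem mul_mul_conjTranspose_le_mul_mul_conjTranspose [Fintype m] [Fintype n] {A B : Matrix n n 𝕜}
    (h : A ≤ B) (M : Matrix m n 𝕜) : M * A * Mᴴ ≤ M * B * Mᴴ := by
  rw [le_iff, ← Matrix.sub_mul, ← Matrix.mul_sub]
  exact h.mul_mul_conjTranspose_same M

variable [DecidableEq n]

theorem diagonal_ofReal_le_smul_one {d : n → ℝ} {c : ℝ} (h : ∀ i, d i ≤ c) :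
    diagonal (fun i => (d i : 𝕜)) ≤ c • (1 : Matrix n n 𝕜) := by
  rw [le_iff, ← diagonal_one, ← diagonal_smul, diagonal_sub, posSemidef_diagonal_iff]
  intro i
  rw [Pi.smul_apply, sub_nonneg, RCLike.real_smul_eq_coe_mul, mul_one, RCLike.ofReal_le_ofReal]
  exact h i

theorem IsHermitian.eigenvalues_le_of_le_smul_one [Fintype n] {A : Matrix n n 𝕜}
    (hA : A.IsHermitian) {c : ℝ} (h : A ≤ c • 1) (i : n) : hA.eigenvalues i ≤ c := by
  rw [← Algebra.algebraMap_eq_smul_one] at h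
  exact (le_algebraMap_iff_spectrum_le hA.isSelfAdjoint).1 h _
    (hA.eigenvalues_mem_spectrum_real i)

theorem IsHermitian.le_eigenvalues_of_smul_one_le [Fintype n] {A : Matrix n n 𝕜}
    (hA : A.IsHermitian) {c : ℝ} (h : c • 1 ≤ A) (i : n) : c ≤ hA.eigenvalues i := by
  rw [← Algebra.algebraMap_eq_smul_one] at h
  exact (algebraMap_le_iff_le_spectrum hA.isSelfAdjoint).1 h _
    (hA.eigenvalues_mem_spectrum_real i)

end Loewner

section OrthogonalSplitting

variable {𝕜 : Type*} [RCLike 𝕜] {n p q r : Type*} [Fintype n] [Fintype q] [Fintype r]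
  {S : Matrix n n 𝕜} {V : Matrix q n 𝕜} {W : Matrix r n 𝕜} {Λ₁ : Matrix q q 𝕜}
  {Λ₂ : Matrix r r 𝕜}

theorem eq_add_of_mul_conjTranspose_eq [DecidableEq n] (hV : S * Vᴴ = Vᴴ * Λ₁)
    (hW : S * Wᴴ = Wᴴ * Λ₂) (hVW : Vᴴ * V + Wᴴ * W = 1) : S = Vᴴ * Λ₁ * V + Wᴴ * Λ₂ * W := by
  rw [← hV, ← hW, Matrix.mul_assoc, Matrix.mul_assoc, ← Matrix.mul_add, hVW, Matrix.mul_one]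

theorem conj_mul_conjTranspose_mul_eq [DecidableEq r] (hW : S * Wᴴ = Wᴴ * Λ₂)
    (hWW : W * Wᴴ = 1) (M : Matrix p n 𝕜) :
    M * Wᴴ * W * S * (M * Wᴴ * W)ᴴ = M * Wᴴ * Λ₂ * (M * Wᴴ)ᴴ := by
  calc M * Wᴴ * W * S * (M * Wᴴ * W)ᴴ = M * Wᴴ * (W * (S * Wᴴ)) * (M * Wᴴ)ᴴ := by
        simp only [conjTranspose_mul, Matrix.mul_assoc]
    _ = M * Wᴴ * Λ₂ * (M * Wᴴ)ᴴ := by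
        rw [hW, ← Matrix.mul_assoc W, hWW, Matrix.one_mul]

theorem mul_mul_conjTranspose_eq_add [DecidableEq n] [DecidableEq r] {L : Matrix q q 𝕜}
    (hV : S * Vᴴ = Vᴴ * (L * Lᴴ)) (hW : S * Wᴴ = Wᴴ * Λ₂) (hWW : W * Wᴴ = 1)
    (hVW : Vᴴ * V + Wᴴ * W = 1) (M : Matrix p n 𝕜) :
    M * S * Mᴴ = M * Vᴴ * L * (M * Vᴴ * L)ᴴ + M * Wᴴ * W * S * (M * Wᴴ * W)ᴴ := by
  rw [conj_mul_conjTranspose_mul_eq hW hWW]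
  conv_lhs => rw [eq_add_of_mul_conjTranspose_eq hV hW hVW]
  simp only [conjTranspose_mul, conjTranspose_conjTranspose, Matrix.mul_add, Matrix.add_mul,
    Matrix.mul_assoc]

theorem conj_mul_conjTranspose_le_smul [Fintype p] [DecidableEq n] [DecidableEq r]
    (hVW : Vᴴ * V + Wᴴ * W = 1) {c : ℝ} (hc : 0 ≤ c) (hΛ : Λ₂ ≤ c • 1) (M : Matrix p n 𝕜) :
    M * Wᴴ * Λ₂ * (M * Wᴴ)ᴴ ≤ c • (M * Mᴴ) := by
  have hWW : Wᴴ * W ≤ 1 := by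
    rw [le_iff, ← hVW, add_sub_cancel_right]
    exact posSemidef_conjTranspose_mul_self V
  calc M * Wᴴ * Λ₂ * (M * Wᴴ)ᴴ ≤ M * Wᴴ * (c • 1) * (M * Wᴴ)ᴴ :=
        mul_mul_conjTranspose_le_mul_mul_conjTranspose hΛ _
    _ = c • (M * (Wᴴ * W) * Mᴴ) := by
        simp only [Matrix.mul_smul, Matrix.smul_mul, Matrix.one_mul, conjTranspose_mul,
          conjTranspose_conjTranspose, Matrix.mul_assoc]
    _ ≤ c • (M * 1 * Mᴴ) :=
        smul_le_smul_of_nonneg_left (mul_mul_conjTranspose_le_mul_mul_conjTranspose hWW M) hc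
    _ = c • (M * Mᴴ) := by rw [Matrix.mul_one]

end OrthogonalSplitting

section Whitening

variable {𝕜 : Type*} [RCLike 𝕜] {n q : Type*} [Fintype n] [Fintype q] [DecidableEq q]
  {C L : Matrix q q 𝕜} {B : Matrix q n 𝕜}

theorem conj_mul_mul_eq_one {A : Matrix n n 𝕜} (hC : C * Cᴴ = 1)
    (hL : L * (B * A * Bᴴ) * Lᴴ = 1) : C * L * B * A * (C * L * B)ᴴ = 1 := by
  calc C * L * B * A * (C * L * B)ᴴ = C * (L * (B * A * Bᴴ) * Lᴴ) * Cᴴ := by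
        simp only [conjTranspose_mul, Matrix.mul_assoc]
    _ = 1 := by rw [hL, Matrix.mul_one, hC]

theorem mul_mul_mul_conjTranspose_le_smul_one {c : ℝ} (hC : C * Cᴴ = 1) (hL : L * Lᴴ ≤ c • 1)
    (hB : B * Bᴴ = 1) : C * L * B * (C * L * B)ᴴ ≤ c • 1 := by
  calc C * L * B * (C * L * B)ᴴ = C * (L * Lᴴ) * Cᴴ := by
        simp only [conjTranspose_mul, Matrix.mul_assoc, ← Matrix.mul_assoc B, hB, Matrix.one_mul]
    _ ≤ C * (c • 1) * Cᴴ := mul_mul_conjTranspose_le_mul_mul_conjTranspose hL C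
    _ = c • 1 := by rw [Matrix.mul_smul, Matrix.mul_one, Matrix.smul_mul, hC]

end Whitening

section RealDiagonal

variable {q : Type*} [Fintype q] [DecidableEq q] {d : q → ℝ}

theorem diagonal_sqrt_mul_conjTranspose (hd : ∀ j, 0 ≤ d j) :
    diagonal (fun j => (√(d j) : ℂ)) * (diagonal fun j => (√(d j) : ℂ))ᴴ
      = diagonal fun j => (d j : ℂ) := by
  rw [diagonal_conjTranspose, diagonal_mul_diagonal]
  congr 1
  funext j
  simp [← Complex.ofReal_mul, Real.mul_self_sqrt (hd j)]

theorem diagonal_inv_sqrt_mul_diagonal_mul_conjTranspose (hd : ∀ j, 0 < d j) :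
    diagonal (fun j => (((√(d j))⁻¹ : ℝ) : ℂ)) * diagonal (fun j => (d j : ℂ)) *
      (diagonal fun j => (((√(d j))⁻¹ : ℝ) : ℂ))ᴴ = 1 := by
  rw [diagonal_conjTranspose, diagonal_mul_diagonal, diagonal_mul_diagonal, ← diagonal_one]
  congr 1
  funext j
  have h : (√(d j))⁻¹ * d j * (√(d j))⁻¹ = 1 := by
    calc (√(d j))⁻¹ * d j * (√(d j))⁻¹ = d j / (√(d j) * √(d j)) := by ring
      _ = 1 := by rw [Real.mul_self_sqrt (hd j).le, div_self (hd j).ne']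
  simp only [Pi.star_apply, Complex.star_def, Complex.conj_ofReal]
  exact_mod_cast h

theorem diagonal_inv_sqrt_mul_conjTranspose_le {d₀ : ℝ} (hd₀ : 0 < d₀) (hd : ∀ j, d₀ ≤ d j) :
    diagonal (fun j => (((√(d j))⁻¹ : ℝ) : ℂ)) *
      (diagonal fun j => (((√(d j))⁻¹ : ℝ) : ℂ))ᴴ ≤ d₀⁻¹ • 1 := by
  rw [diagonal_conjTranspose, diagonal_mul_diagonal]
  convert diagonal_ofReal_le_smul_one (𝕜 := ℂ) (d := fun j => (d j)⁻¹)
    fun j => inv_anti₀ hd₀ (hd j) using 3 with j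
  simp only [Pi.star_apply, Complex.star_def, Complex.conj_ofReal, ← Complex.ofReal_mul]
  rw [← mul_inv, Real.mul_self_sqrt (hd₀.trans_le (hd j)).le]
  rfl

end RealDiagonal

section Rows

variable {ι κ α : Type*} [Fintype κ] [CommSemiring α] [StarRing α] [DecidableEq ι]
  {x : ι → κ → α}

theorem of_star_mul_conjTranspose_of_star_eq_one
    (h : ∀ j k, star (x j) ⬝ᵥ x k = if j = k then 1 else 0) :
    (of fun j i => star (x j i)) * (of fun j i => star (x j i))ᴴ = 1 := by
  ext j k
  simpa [mul_apply, dotProduct, one_apply] using h j k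

theorem mul_conjTranspose_of_star [Fintype ι] (A : Matrix κ κ α) {lam : ι → α}
    (h : ∀ j, A *ᵥ x j = lam j • x j) :
    A * (of fun j i => star (x j i))ᴴ = (of fun j i => star (x j i))ᴴ * diagonal lam := by
  ext i j
  simpa [mul_apply, mulVec, dotProduct, diagonal_apply, mul_comm] using congrFun (h j) i

theorem of_star_mul_mul_conjTranspose_of_star [Fintype ι] {A : Matrix κ κ α} {lam : ι → α}
    (h₁ : ∀ j k, star (x j) ⬝ᵥ x k = if j = k then 1 else 0)
    (h₂ : ∀ j, A *ᵥ x j = lam j • x j) :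
    (of fun j i => star (x j i)) * A * (of fun j i => star (x j i))ᴴ = diagonal lam := by
  rw [Matrix.mul_assoc, mul_conjTranspose_of_star A h₂, ← Matrix.mul_assoc,
    of_star_mul_conjTranspose_of_star_eq_one h₁, Matrix.one_mul]

end Rows

section Padding

variable {ι α : Type*} {m n : ℕ}

theorem of_dite_lt_eq_mul_submatrix_one [Semiring α] (h : m ≤ n) (P : Matrix ι (Fin m) α) :
    (of fun j (i : Fin n) => if hi : (i : ℕ) < m then P j ⟨i, hi⟩ else 0)
      = P * (1 : Matrix (Fin n) (Fin n) α).submatrix (Fin.castLE h) id := by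
  ext j i
  by_cases hi : (i : ℕ) < m
  · rw [mul_apply, Finset.sum_eq_single ⟨i, hi⟩] <;> simp +contextual [one_apply, hi, Fin.ext_iff]
  · rw [of_apply, dif_neg hi, mul_apply]
    refine (Finset.sum_eq_zero fun x _ => ?_).symm
    simp [Fin.ext_iff, show (x : ℕ) ≠ i by omega]

theorem of_dite_lt_mul_mul_conjTranspose_eq_diagonal [Fintype ι] [DecidableEq ι] [CommSemiring α]
    [StarRing α] (h : m ≤ n) {u : ι → Fin m → α} {P : Matrix ι (Fin m) α}
    (hP : P = of fun j i => star (u j i)) (hu : ∀ j k, star (u j) ⬝ᵥ u k = if j = k then 1 else 0)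
    {A : Matrix (Fin n) (Fin n) α} {lam : ι → α}
    (hA : ∀ j, A.submatrix (Fin.castLE h) (Fin.castLE h) *ᵥ u j = lam j • u j) :
    (of fun j (i : Fin n) => if hi : (i : ℕ) < m then P j ⟨i, hi⟩ else 0) * A *
        (of fun j (i : Fin n) => if hi : (i : ℕ) < m then P j ⟨i, hi⟩ else 0)ᴴ
      = diagonal lam := by
  have hE : (1 : Matrix (Fin n) (Fin n) α).submatrix (Fin.castLE h) id * A *
      ((1 : Matrix (Fin n) (Fin n) α).submatrix (Fin.castLE h) id)ᴴ
      = A.submatrix (Fin.castLE h) (Fin.castLE h) := by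
    ext i k
    simp [mul_apply, one_apply]
  rw [of_dite_lt_eq_mul_submatrix_one h, conjTranspose_mul,
    ← of_star_mul_mul_conjTranspose_of_star hu hA, ← hE, hP]
  simp only [Matrix.mul_assoc]

theorem of_dite_lt_mul_conjTranspose_eq_one [Fintype ι] [DecidableEq ι] [CommSemiring α]
    [StarRing α] (h : m ≤ n) {u : ι → Fin m → α} {P : Matrix ι (Fin m) α}
    (hP : P = of fun j i => star (u j i)) (hu : ∀ j k, star (u j) ⬝ᵥ u k = if j = k then 1 else 0) :
    (of fun j (i : Fin n) => if hi : (i : ℕ) < m then P j ⟨i, hi⟩ else 0) *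
        (of fun j (i : Fin n) => if hi : (i : ℕ) < m then P j ⟨i, hi⟩ else 0)ᴴ = 1 := by
  have h₁ := of_dite_lt_mul_mul_conjTranspose_eq_diagonal h hP hu (A := 1) (lam := fun _ => 1)
    fun j => by rw [submatrix_one _ (Fin.castLE_injective h), one_mulVec, one_smul]
  rwa [Matrix.mul_one, diagonal_one] at h₁

end Padding

end Matrix

section eigJ

variable {n : ℕ} {A : Matrix (Fin n) (Fin n) ℂ} {j k : ℕ}

theorem exists_eigenvalues_eq_eigJ (hA : A.IsHermitian) (hj : 1 ≤ j) (hjn : j ≤ n) :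
    ∃ i, hA.eigenvalues i = eigJ A j := by
  have hlen : ((Finset.univ.val.map hA.eigenvalues).sort (· ≤ ·)).length = n := by simp
  rw [eigJ, dif_pos hA, List.getD_eq_getElem _ _ (by omega)]
  obtain ⟨i, -, hi⟩ := Multiset.mem_map.1
    ((Multiset.mem_sort (r := (· ≤ · : ℝ → ℝ → Prop))).1 (List.getElem_mem _))
  exact ⟨i, hi⟩

theorem eigJ_antitone (hA : A.IsHermitian) (hj : 1 ≤ j) (hjk : j ≤ k) (hkn : k ≤ n) :
    eigJ A k ≤ eigJ A j := by
  have hlen : ((Finset.univ.val.map hA.eigenvalues).sort (· ≤ ·)).length = n := by simp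
  rw [eigJ, dif_pos hA, eigJ, dif_pos hA, List.getD_eq_getElem _ _ (by omega),
    List.getD_eq_getElem _ _ (by omega)]
  exact (Multiset.pairwise_sort ..).rel_get_of_le (by simp; omega)

theorem eigJ_le_of_le_smul_one (hA : A.IsHermitian) {c : ℝ} (h : A ≤ c • 1) (hj : 1 ≤ j)
    (hjn : j ≤ n) : eigJ A j ≤ c := by
  obtain ⟨i, hi⟩ := exists_eigenvalues_eq_eigJ hA hj hjn
  exact hi ▸ hA.eigenvalues_le_of_le_smul_one h i

theorem le_eigJ_of_smul_one_le (hA : A.IsHermitian) {c : ℝ} (h : c • 1 ≤ A) (hj : 1 ≤ j)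
    (hjn : j ≤ n) : c ≤ eigJ A j := by
  obtain ⟨i, hi⟩ := exists_eigenvalues_eq_eigJ hA hj hjn
  exact hi ▸ hA.le_eigenvalues_of_smul_one_le h i

theorem eigJ_nonneg (hA : A.PosSemidef) (hj : 1 ≤ j) (hjn : j ≤ n) : 0 ≤ eigJ A j :=
  le_eigJ_of_smul_one_le hA.isHermitian (by rwa [zero_smul, nonneg_iff_posSemidef]) hj hjn

theorem eigJ_le_one_and_one_sub_le_of_add_eq_one {B : Matrix (Fin n) (Fin n) ℂ}
    (hAB : A + B = 1) (hA : A.IsHermitian) (hB : B.PosSemidef) {c : ℝ} (hBc : B ≤ c • 1)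
    (hj : 1 ≤ j) (hjn : j ≤ n) : eigJ A j ≤ 1 ∧ 1 - c ≤ eigJ A j := by
  obtain rfl : A = 1 - B := eq_sub_of_add_eq hAB
  refine ⟨eigJ_le_of_le_smul_one hA ?_ hj hjn, le_eigJ_of_smul_one_le hA ?_ hj hjn⟩
  · rw [one_smul, sub_le_self_iff]
    exact hB.nonneg
  · rw [sub_smul, one_smul]
    exact sub_le_sub_left hBc 1

end eigJ

theorem stmt_14_general {q m n : ℕ} (hq : 0 < q) (hqm : q ≤ m) (hmn : m ≤ n) (hqn : q < n)
    (S : Matrix (Fin n) (Fin n) ℂ) (hS : S.PosSemidef)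
    (Sm : Matrix (Fin m) (Fin m) ℂ)
    (hSm : Sm = S.submatrix (Fin.castLE hmn) (Fin.castLE hmn))
    (hμq : 0 < eigJ Sm q)
    (u : Fin q → Fin m → ℂ)
    (hu_orth : ∀ j k, star (u j) ⬝ᵥ u k = if j = k then 1 else 0)
    (hu_eig : ∀ j : Fin q, Sm.mulVec (u j) = (eigJ Sm ((j : ℕ) + 1) : ℂ) • u j)
    (v : Fin q → Fin n → ℂ)
    (hv_eig : ∀ j : Fin q, S.mulVec (v j) = (eigJ S ((j : ℕ) + 1) : ℂ) • v j)
    (w : Fin (n - q) → Fin n → ℂ)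
    (hw_orth : ∀ j k, star (w j) ⬝ᵥ w k = if j = k then 1 else 0)
    (hw_eig : ∀ j : Fin (n - q), S.mulVec (w j) = (eigJ S (q + (j : ℕ) + 1) : ℂ) • w j)
    (P : Matrix (Fin q) (Fin m) ℂ) (hP : P = Matrix.of fun j i => star (u j i))
    (Pt : Matrix (Fin q) (Fin n) ℂ)
    (hPt : Pt = Matrix.of fun j (i : Fin n) =>
      if h : (i : ℕ) < m then P j ⟨(i : ℕ), h⟩ else 0)
    (Pn : Matrix (Fin q) (Fin n) ℂ) (hPn : Pn = Matrix.of fun j i => star (v j i))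
    (Q : Matrix (Fin (n - q)) (Fin n) ℂ)
    (hQ : Q = Matrix.of fun j i => star (w j i))
    (hcomplete : Pnᴴ * Pn + Qᴴ * Q = 1)
    (C : Matrix (Fin q) (Fin q) ℂ) (hC : C * Cᴴ = 1)
    (D : Matrix (Fin q) (Fin q) ℂ)
    (hD : D = C * Matrix.diagonal
        (fun j : Fin q => (((Real.sqrt (eigJ Sm ((j : ℕ) + 1)))⁻¹ : ℝ) : ℂ)) * Pt * Pnᴴ *
      Matrix.diagonal (fun j : Fin q => ((Real.sqrt (eigJ S ((j : ℕ) + 1)) : ℝ) : ℂ)))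
    (R : Matrix (Fin q) (Fin n) ℂ)
    (hR : R = C * Matrix.diagonal
        (fun j : Fin q => (((Real.sqrt (eigJ Sm ((j : ℕ) + 1)))⁻¹ : ℝ) : ℂ)) * Pt * Qᴴ * Q) :
    (1 : Matrix (Fin q) (Fin q) ℂ) = D * Dᴴ + R * S * Rᴴ ∧
    eigJ (D * Dᴴ) q ≤ 1 ∧
    1 - eigJ S (q + 1) / eigJ Sm q ≤ eigJ (D * Dᴴ) q := by
  have hSH : S.IsHermitian := hS.isHermitian
  have hμ : ∀ j : Fin q, eigJ Sm q ≤ eigJ Sm (j + 1) := fun j =>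
    eigJ_antitone (hSm ▸ hSH.submatrix _) (by omega) (by omega) hqm
  have hlamq : 0 ≤ eigJ S (q + 1) := eigJ_nonneg hS (by omega) hqn
  have hPtS : Pt * S * Ptᴴ = diagonal fun j : Fin q => (eigJ Sm (j + 1) : ℂ) :=
    hPt ▸ of_dite_lt_mul_mul_conjTranspose_eq_diagonal hmn hP hu_orth (hSm ▸ hu_eig)
  have hPt₁ : Pt * Ptᴴ = 1 := hPt ▸ of_dite_lt_mul_conjTranspose_eq_one hmn hP hu_orth
  have hSQ : S * Qᴴ = Qᴴ * _ := hQ ▸ mul_conjTranspose_of_star S hw_eig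
  have hQQ : Q * Qᴴ = 1 := hQ ▸ of_star_mul_conjTranspose_of_star_eq_one hw_orth
  have hident : 1 = D * Dᴴ + R * S * Rᴴ := by
    rw [hD, hR, ← mul_mul_conjTranspose_eq_add ?_ hSQ hQQ hcomplete, conj_mul_mul_eq_one hC]
    · rw [hPtS]
      exact diagonal_inv_sqrt_mul_diagonal_mul_conjTranspose fun j => hμq.trans_le (hμ j)
    · rw [diagonal_sqrt_mul_conjTranspose fun j => eigJ_nonneg hS (by omega) (by omega), hPn]
      exact mul_conjTranspose_of_star S hv_eig
  have hRSR : R * S * Rᴴ ≤ (eigJ S (q + 1) / eigJ Sm q) • 1 := by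
    rw [hR, conj_mul_conjTranspose_mul_eq hSQ hQQ, div_eq_mul_inv, mul_smul]
    refine (conj_mul_conjTranspose_le_smul hcomplete hlamq ?_ _).trans
      (smul_le_smul_of_nonneg_left (mul_mul_mul_conjTranspose_le_smul_one hC
        (diagonal_inv_sqrt_mul_conjTranspose_le hμq hμ) hPt₁) hlamq)
    exact diagonal_ofReal_le_smul_one fun j => eigJ_antitone hSH (by omega) (by omega) (by omega)
  exact ⟨hident, eigJ_le_one_and_one_sub_le_of_add_eq_one hident.symm
    (isHermitian_mul_conjTranspose_self D) (hS.mul_mul_conjTranspose_same R) hRSR hq le_rfl⟩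

/-- with the notation of the context (Hermitian PSD `S`, its m×m top-left
submatrix `Sm`, eigenvector matrices `Pt` (padded), `Pn`, `Q` coming from an orthonormal
basis of eigenvectors of `S`, diagonal eigenvalue matrices, `C Cᴴ = 1`,
`D = C Λ^{-1/2} Pt Pnᴴ Λn^{1/2}` and `R = C Λ^{-1/2} Pt Qᴴ Q`), one has the identity
`I_q = D Dᴴ + R S Rᴴ`, and the smallest eigenvalue `Δ_q` of `D Dᴴ` satisfies
`1 ≥ Δ_q ≥ 1 − λ_{q+1}(S)/μ_q(Sm)`. -/
theorem stmt_14 {q m n : ℕ} (hq : 0 < q) (hqm : q ≤ m) (hmn : m ≤ n) (hqn : q < n)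
    (S : Matrix (Fin n) (Fin n) ℂ) (hS : S.PosSemidef)
    (Sm : Matrix (Fin m) (Fin m) ℂ)
    (hSm : Sm = S.submatrix (Fin.castLE hmn) (Fin.castLE hmn))
    (hμq : 0 < eigJ Sm q)
    (u : Fin q → Fin m → ℂ)
    (hu_orth : ∀ j k, star (u j) ⬝ᵥ u k = if j = k then 1 else 0)
    (hu_eig : ∀ j : Fin q, Sm.mulVec (u j) = (eigJ Sm ((j : ℕ) + 1) : ℂ) • u j)
    (v : Fin q → Fin n → ℂ)
    (hv_orth : ∀ j k, star (v j) ⬝ᵥ v k = if j = k then 1 else 0)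
    (hv_eig : ∀ j : Fin q, S.mulVec (v j) = (eigJ S ((j : ℕ) + 1) : ℂ) • v j)
    (w : Fin (n - q) → Fin n → ℂ)
    (hw_orth : ∀ j k, star (w j) ⬝ᵥ w k = if j = k then 1 else 0)
    (hw_eig : ∀ j : Fin (n - q), S.mulVec (w j) = (eigJ S (q + (j : ℕ) + 1) : ℂ) • w j)
    (hvw : ∀ j k, star (v j) ⬝ᵥ w k = 0)
    (P : Matrix (Fin q) (Fin m) ℂ) (hP : P = Matrix.of fun j i => star (u j i))
    (Pt : Matrix (Fin q) (Fin n) ℂ)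
    (hPt : Pt = Matrix.of fun j (i : Fin n) =>
      if h : (i : ℕ) < m then P j ⟨(i : ℕ), h⟩ else 0)
    (Pn : Matrix (Fin q) (Fin n) ℂ) (hPn : Pn = Matrix.of fun j i => star (v j i))
    (Q : Matrix (Fin (n - q)) (Fin n) ℂ)
    (hQ : Q = Matrix.of fun j i => star (w j i))
    (hcomplete : Pnᴴ * Pn + Qᴴ * Q = 1)
    (C : Matrix (Fin q) (Fin q) ℂ) (hC : C * Cᴴ = 1)
    (D : Matrix (Fin q) (Fin q) ℂ)
    (hD : D = C * Matrix.diagonal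
        (fun j : Fin q => (((Real.sqrt (eigJ Sm ((j : ℕ) + 1)))⁻¹ : ℝ) : ℂ)) * Pt * Pnᴴ *
      Matrix.diagonal (fun j : Fin q => ((Real.sqrt (eigJ S ((j : ℕ) + 1)) : ℝ) : ℂ)))
    (R : Matrix (Fin q) (Fin n) ℂ)
    (hR : R = C * Matrix.diagonal
        (fun j : Fin q => (((Real.sqrt (eigJ Sm ((j : ℕ) + 1)))⁻¹ : ℝ) : ℂ)) * Pt * Qᴴ * Q) :
    (1 : Matrix (Fin q) (Fin q) ℂ) = D * Dᴴ + R * S * Rᴴ ∧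
    eigJ (D * Dᴴ) q ≤ 1 ∧
    1 - eigJ S (q + 1) / eigJ Sm q ≤ eigJ (D * Dᴴ) q :=
  stmt_14_general hq hqm hmn hqn S hS Sm hSm hμq u hu_orth hu_eig v hv_eig w hw_orth hw_eig P hP Pt
    hPt Pn hPn Q hQ hcomplete C hC D hD R hR
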